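/- Fix T ∈ (0,∞), β ∈ (1,2], and constants A > 0, α_0 > 0. Assume 0 ≤ a_{i,j} = a_{j,i} ≤ A(i+j), 0 ≤ p_{i,j} = p_{j,i} ≤ 1, and N_{i,j}^s = N_{j,i}^s ≥ 0 with ∑_{s=1}^{i+j−1} s N_{i,j}^s = i+j and N_{i,j}^s ≤ α_0. Let w = (w_i)_{i≥1} be a classical solution of the discrete coagulation equations with collisional breakage on [0,T] with nonnegative components, with sup_{t∈[0,T]} ∑_{i≥1} i² w_i(t) < ∞ and finite first moment. Then the total mass is conserved: ∑_{i=1}^{∞} i w_i(t) = ∑_{i=1}^{∞} i w_i(0) for all t ∈ [0,T]. -/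

import Mathlib

/-- The coagulation part of the right-hand side of the discrete coagulation
equations with collisional breakage for clusters of size `i`:
`(1/2) ∑_{j=1}^{i−1} p_{j,i−j} a_{j,i−j} wⱼ w_{i−j}`. -/
noncomputable def coagGain (a p : ℕ → ℕ → ℝ) (i : ℕ) (w : ℕ → ℝ) : ℝ :=
  (1/2) * ∑ j ∈ Finset.Icc 1 (i-1), p j (i-j) * a j (i-j) * w j * w (i-j)

/-- The loss term `∑_{j=1}^∞ a_{i,j} wᵢ wⱼ` (the sum over `j ≥ 1` written as a
sum over `j : ℕ` via the shift `j ↦ j + 1`). -/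
noncomputable def coagLoss (a : ℕ → ℕ → ℝ) (i : ℕ) (w : ℕ → ℝ) : ℝ :=
  ∑' j : ℕ, a i (j+1) * w i * w (j+1)

/-- The summand of the breakage gain term: for `m : ℕ` (encoding `j = i + 1 + m`),
`∑_{k=1}^{j−1} N_{j−k,k}^i (1 − p_{j−k,k}) a_{j−k,k} w_{j−k} w_k`. -/
noncomputable def breakGainTerm (a p : ℕ → ℕ → ℝ) (N : ℕ → ℕ → ℕ → ℝ) (i m : ℕ)
    (w : ℕ → ℝ) : ℝ :=
  ∑ k ∈ Finset.Icc 1 (i+m),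
    N (i+1+m-k) k i * (1 - p (i+1+m-k) k) * a (i+1+m-k) k * w (i+1+m-k) * w k

/-- The breakage gain term
`(1/2) ∑_{j=i+1}^∞ ∑_{k=1}^{j−1} N_{j−k,k}^i (1 − p_{j−k,k}) a_{j−k,k} w_{j−k} w_k`
(the sum over `j ≥ i + 1` written as a sum over `m : ℕ` via `j = i + 1 + m`). -/
noncomputable def breakGain (a p : ℕ → ℕ → ℝ) (N : ℕ → ℕ → ℕ → ℝ) (i : ℕ)
    (w : ℕ → ℝ) : ℝ :=
  (1/2) * ∑' m : ℕ, breakGainTerm a p N i m w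

/-- The full right-hand side of the discrete coagulation equations with
collisional breakage for clusters of size `i`. -/
noncomputable def coagRHS (a p : ℕ → ℕ → ℝ) (N : ℕ → ℕ → ℕ → ℝ) (i : ℕ)
    (w : ℕ → ℝ) : ℝ :=
  coagGain a p i w - coagLoss a i w + breakGain a p N i w

/-- `w` is a classical solution of the discrete coagulation equations with
collisional breakage on `[0, T]`: each `wᵢ` (for `i ≥ 1`) is a nonnegative
continuously differentiable function on `[0, T]`, all the series involved in
the right-hand side converge, and the equations hold on `[0, T]`. -/
def IsCoagBreakSol (a p : ℕ → ℕ → ℝ) (N : ℕ → ℕ → ℕ → ℝ) (T : ℝ)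
    (w : ℕ → ℝ → ℝ) : Prop :=
  (∀ i, 1 ≤ i → ContDiffOn ℝ 1 (w i) (Set.Icc 0 T)) ∧
  (∀ i, 1 ≤ i → ∀ t ∈ Set.Icc (0:ℝ) T, 0 ≤ w i t) ∧
  (∀ i, 1 ≤ i → ∀ t ∈ Set.Icc (0:ℝ) T,
    Summable (fun j : ℕ => a i (j+1) * w i t * w (j+1) t) ∧
    Summable (fun m : ℕ => breakGainTerm a p N i m (fun j => w j t)) ∧
    HasDerivWithinAt (w i) (coagRHS a p N i (fun j => w j t)) (Set.Icc 0 T) t)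

/-!
Let `Mₙ(t) = ∑_{i ≤ n} i wᵢ(t)`. Its derivative is a sum over colliding pairs `(j, k)` of a
flux that vanishes when `j + k ≤ n`: such collisions only move mass among sizes `≤ n`, since
`∑ₛ s N_{j,k}^s = j + k`. For `j + k > n` the flux is at most
`(j + k) a_{j,k} wⱼ wₖ ≤ 4A (j² wⱼ)(k² wₖ)`, so `Mₙ'` is bounded by `4AC²` and tends to `0`
pointwise by Tannery's theorem. Dominated convergence in `Mₙ(t) - Mₙ(0) = ∫₀ᵗ Mₙ'` finishes the
proof.
-/

open Finset Filter Topology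

/-- Regroups a sum over pairs `(j, k)` of positive integers according to `d = j + k`. -/
theorem HasSum.sum_Icc_of_pairs {α : Type*} [AddCommMonoid α] [TopologicalSpace α]
    [ContinuousAdd α] [RegularSpace α] {F : ℕ → ℕ → α} {S : α}
    (h : HasSum (fun x : ℕ × ℕ => F (x.1 + 1) (x.2 + 1)) S) :
    HasSum (fun d => ∑ k ∈ Icc 1 (d - 1), F (d - k) k) S := by
  set ψ : ℕ × ℕ → α := fun y => if y.2 ∈ Icc 1 (y.1 - 1) then F (y.1 - y.2) y.2 else 0
  have hinj : Function.Injective fun x : ℕ × ℕ => (x.1 + x.2 + 2, x.2 + 1) := by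
    rintro ⟨_, _⟩ ⟨_, _⟩ h
    simp only [Prod.mk.injEq] at h ⊢
    omega
  have hψ : HasSum ψ S := by
    refine (hinj.hasSum_iff fun y hy => if_neg fun hk =>
      hy ⟨(y.1 - y.2 - 1, y.2 - 1), ?_⟩).mp ?_
    · simp only [mem_Icc] at hk
      ext <;> simp only <;> omega
    · convert h using 2 with x
      simp only [Function.comp_apply, mem_Icc]
      rw [if_pos (by omega), show x.1 + x.2 + 2 - (x.2 + 1) = x.1 + 1 by omega]
  refine hψ.prod_fiberwise fun d => ?_
  have : HasSum (fun k => ψ (d, k)) (∑ k ∈ Icc 1 (d - 1), ψ (d, k)) :=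
    hasSum_sum_of_ne_finset_zero fun k hk => if_neg hk
  rwa [sum_congr rfl fun k hk => if_pos hk] at this

theorem sum_Icc_reflect_pairs {M : Type*} [AddCommMonoid M] (F : ℕ → ℕ → M) (d : ℕ) :
    ∑ k ∈ Icc 1 (d - 1), F (d - k) k = ∑ j ∈ Icc 1 (d - 1), F j (d - j) := by
  refine sum_nbij' (d - ·) (d - ·) ?_ ?_ ?_ ?_ ?_ <;>
    intro k hk <;> simp only [mem_Icc] at hk ⊢
  all_goals first | omega | rw [Nat.sub_sub_self (by omega)]

theorem sum_Icc_one_eq_sum_range {M : Type*} [AddCommMonoid M] {f : ℕ → M} (hf : f 0 = 0)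
    (n : ℕ) : ∑ i ∈ Icc 1 n, f i = ∑ i ∈ range (n + 1), f i := by
  refine sum_subset (fun i hi => ?_) fun i hi hni => ?_
  · simp only [mem_Icc, mem_range] at hi ⊢
    omega
  · obtain rfl : i = 0 := by simp only [mem_Icc, mem_range] at hi hni; omega
    exact hf

theorem hasSum_ite_le_sum_Icc {M : Type*} [AddCommMonoid M] [TopologicalSpace M] {g : ℕ → M}
    (hg : g 0 = 0) (n : ℕ) :
    HasSum (fun i => if i ≤ n then g i else 0) (∑ i ∈ Icc 1 n, g i) := by
  have : HasSum (fun i => if i ≤ n then g i else 0)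
      (∑ i ∈ Icc 1 n, if i ≤ n then g i else 0) := by
    refine hasSum_sum_of_ne_finset_zero fun i hi => ?_
    rw [mem_Icc, not_and_or, not_le, Nat.lt_one_iff] at hi
    rcases hi with rfl | hi
    · simp [hg]
    · exact if_neg hi
  rwa [sum_congr rfl fun i hi => if_pos (mem_Icc.mp hi).2] at this

theorem HasSum.tendsto_sum_Icc_one {M : Type*} [AddCommMonoid M] [TopologicalSpace M]
    {f : ℕ → M} {S : M} (h : HasSum f S) (hf0 : f 0 = 0) :
    Tendsto (fun n => ∑ i ∈ Icc 1 n, f i) atTop (𝓝 S) := by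
  simp only [sum_Icc_one_eq_sum_range hf0]
  exact h.tendsto_sum_nat.comp (tendsto_add_atTop_nat 1)

theorem hasSum_succ_mul_succ {f : ℕ → ℝ} (hf : Summable f) (hf0 : f 0 = 0) (hnn : 0 ≤ f) :
    HasSum (fun x : ℕ × ℕ => f (x.1 + 1) * f (x.2 + 1)) ((∑' i, f i) ^ 2) := by
  have hs : Summable fun b => f (b + 1) := (summable_nat_add_iff 1).mpr hf
  have hprod := hs.mul_of_nonneg hs (fun b => hnn (b + 1)) (fun b => hnn (b + 1))
  rw [sq, hf.tsum_eq_zero_add, hf0, zero_add, hs.tsum_mul_tsum hs hprod]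
  exact hprod.hasSum

theorem tendsto_sub_of_hasDerivWithinAt {E : Type*} [NormedAddCommGroup E] [NormedSpace ℝ E]
    [CompleteSpace E] {F F' : ℕ → ℝ → E} {a b B : ℝ} (hab : a ≤ b)
    (hF : ∀ n, ∀ s ∈ Set.Icc a b, HasDerivWithinAt (F n) (F' n s) (Set.Icc a b) s)
    (hF' : ∀ n, ContinuousOn (F' n) (Set.Icc a b))
    (hB : ∀ n, ∀ s ∈ Set.Icc a b, ‖F' n s‖ ≤ B)
    (hlim : ∀ s ∈ Set.Icc a b, Tendsto (fun n => F' n s) atTop (𝓝 0)) :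
    Tendsto (fun n => F n b - F n a) atTop (𝓝 0) := by
  have hFTC : ∀ n, ∫ s in a..b, F' n s = F n b - F n a := fun n =>
    intervalIntegral.integral_eq_sub_of_hasDeriv_right_of_le hab
      (fun s hs => (hF n s hs).continuousWithinAt)
      (fun s hs => (hF n s (Set.Ioo_subset_Icc_self hs)).mono_of_mem_nhdsWithin
        (Icc_mem_nhdsGT_of_mem ⟨hs.1.le, hs.2⟩))
      ((hF' n).intervalIntegrable_of_Icc hab)
  have hsub : Set.uIoc a b ⊆ Set.Icc a b := by
    rw [Set.uIoc_of_le hab]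
    exact Set.Ioc_subset_Icc_self
  have hDCT := intervalIntegral.tendsto_integral_filter_of_dominated_convergence
    (μ := MeasureTheory.volume) (fun _ => B)
    (Eventually.of_forall fun n => ((hF' n).mono hsub).aestronglyMeasurable measurableSet_uIoc)
    (Eventually.of_forall fun n => MeasureTheory.ae_of_all _ fun s hs => hB n s (hsub hs))
    intervalIntegrable_const (MeasureTheory.ae_of_all _ fun s hs => hlim s (hsub hs))
  rw [intervalIntegral.integral_zero] at hDCT
  exact hDCT.congr hFTC

section Fluxes

variable (a p : ℕ → ℕ → ℝ) (N : ℕ → ℕ → ℕ → ℝ) (u : ℕ → ℝ) (n : ℕ)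

noncomputable def collisionMassRate (j k : ℕ) : ℝ := ((j + k : ℕ) : ℝ) * (a j k * u j * u k)

noncomputable def coagGainFlux (j k : ℕ) : ℝ :=
  if j + k ≤ n then ((j + k : ℕ) : ℝ) / 2 * (p j k * a j k * u j * u k) else 0

noncomputable def coagLossFlux (j k : ℕ) : ℝ :=
  if j ≤ n then (j : ℝ) * (a j k * u j * u k) else 0

noncomputable def fragmentGain (i j k : ℕ) : ℝ :=
  if i < j + k then N j k i * (1 - p j k) * a j k * u j * u k else 0

noncomputable def fragmentMass (j k : ℕ) : ℝ :=
  ∑ s ∈ Icc 1 (min n (j + k - 1)), (s : ℝ) * N j k s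

noncomputable def breakGainFlux (j k : ℕ) : ℝ :=
  fragmentMass N n j k / 2 * ((1 - p j k) * a j k * u j * u k)

/-- The contribution of collisions between sizes `j` and `k` to
`∑_{i ≤ n} i * coagRHS a p N i u`. The loss is split evenly between `(j, k)` and `(k, j)` so that
the flux cancels pointwise when `j + k ≤ n`. -/
noncomputable def massFlux (j k : ℕ) : ℝ :=
  coagGainFlux a p u n j k + breakGainFlux a p N u n j k
    - (coagLossFlux a u n j k + coagLossFlux a u n k j) / 2

variable {a p N u n} {i j k : ℕ}

theorem fragmentMass_nonneg (hN : ∀ s, 0 ≤ N j k s) : 0 ≤ fragmentMass N n j k :=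
  sum_nonneg fun s _ => mul_nonneg s.cast_nonneg (hN s)

theorem fragmentMass_le (hN : ∀ s, 0 ≤ N j k s)
    (hmass : ∑ s ∈ Icc 1 (j + k - 1), (s : ℝ) * N j k s = (j : ℝ) + (k : ℝ)) :
    fragmentMass N n j k ≤ ((j + k : ℕ) : ℝ) := by
  rw [Nat.cast_add, ← hmass]
  exact sum_le_sum_of_subset_of_nonneg (Icc_subset_Icc_right (min_le_right _ _))
    fun s _ _ => mul_nonneg s.cast_nonneg (hN s)

theorem fragmentMass_of_le (h : j + k ≤ n + 1)
    (hmass : ∑ s ∈ Icc 1 (j + k - 1), (s : ℝ) * N j k s = (j : ℝ) + (k : ℝ)) :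
    fragmentMass N n j k = ((j + k : ℕ) : ℝ) := by
  rw [fragmentMass, min_eq_right (by omega), hmass, Nat.cast_add]

theorem single_mul_le_of_mass (hi : i ∈ Icc 1 (j + k - 1)) (hN : ∀ s, 0 ≤ N j k s)
    (hmass : ∑ s ∈ Icc 1 (j + k - 1), (s : ℝ) * N j k s = (j : ℝ) + (k : ℝ)) :
    (i : ℝ) * N j k i ≤ ((j + k : ℕ) : ℝ) := by
  rw [Nat.cast_add, ← hmass]
  exact single_le_sum (f := fun s : ℕ => (s : ℝ) * N j k s)
    (fun s _ => mul_nonneg s.cast_nonneg (hN s)) hi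

theorem coagLossFlux_nonneg (ha : 0 ≤ a j k) (huj : 0 ≤ u j) (huk : 0 ≤ u k) :
    0 ≤ coagLossFlux a u n j k := by
  rw [coagLossFlux]
  split_ifs <;> positivity

theorem coagLossFlux_le (ha : 0 ≤ a j k) (huj : 0 ≤ u j) (huk : 0 ≤ u k) :
    coagLossFlux a u n j k ≤ j * (a j k * u j * u k) := by
  rw [coagLossFlux]
  split_ifs
  exacts [le_rfl, by positivity]

theorem massFlux_eq_zero (h : j + k ≤ n) (hsymm : a k j = a j k)
    (hmass : ∑ s ∈ Icc 1 (j + k - 1), (s : ℝ) * N j k s = (j : ℝ) + (k : ℝ)) :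
    massFlux a p N u n j k = 0 := by
  rw [massFlux, coagGainFlux, coagLossFlux, coagLossFlux, breakGainFlux,
    fragmentMass_of_le (by omega) hmass, if_pos h, if_pos (by omega), if_pos (by omega), hsymm]
  push_cast
  ring

theorem abs_massFlux_le (ha : 0 ≤ a j k) (hsymm : a k j = a j k) (hp0 : 0 ≤ p j k)
    (hp1 : p j k ≤ 1) (hN : ∀ s, 0 ≤ N j k s)
    (hmass : ∑ s ∈ Icc 1 (j + k - 1), (s : ℝ) * N j k s = (j : ℝ) + (k : ℝ))
    (huj : 0 ≤ u j) (huk : 0 ≤ u k) :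
    |massFlux a p N u n j k| ≤ collisionMassRate a u j k := by
  set R := a j k * u j * u k
  have hR : 0 ≤ R := by positivity
  have hS : ((j + k : ℕ) : ℝ) = j + k := Nat.cast_add j k
  have hgain : 0 ≤ coagGainFlux a p u n j k ∧
      coagGainFlux a p u n j k ≤ (j + k) / 2 * (p j k * R) := by
    rw [coagGainFlux, hS]
    split_ifs
    · exact ⟨by positivity, le_of_eq (by ring)⟩
    · exact ⟨le_rfl, by positivity⟩
  have hbreak : 0 ≤ breakGainFlux a p N u n j k ∧
      breakGainFlux a p N u n j k ≤ (j + k) / 2 * ((1 - p j k) * R) := by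
    have h0 := fragmentMass_nonneg (n := n) hN
    have h1 := fragmentMass_le (n := n) hN hmass
    have h2 : 0 ≤ (1 - p j k) * R := mul_nonneg (by linarith) hR
    rw [hS] at h1
    rw [breakGainFlux, show (1 - p j k) * a j k * u j * u k = (1 - p j k) * R by ring]
    exact ⟨by positivity, by gcongr⟩
  have ha' : 0 ≤ a k j := hsymm ▸ ha
  have hL₁ := coagLossFlux_le (n := n) ha huj huk
  have hL₂ := coagLossFlux_le (n := n) ha' huk huj
  rw [show a k j * u k * u j = R by rw [hsymm]; ring] at hL₂
  have := coagLossFlux_nonneg (n := n) ha huj huk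
  have := coagLossFlux_nonneg (n := n) ha' huk huj
  rw [massFlux, collisionMassRate, hS, abs_le]
  constructor <;> linarith [hgain.1, hgain.2, hbreak.1, hbreak.2]

theorem fragmentGain_nonneg (ha : 0 ≤ a j k) (hp1 : p j k ≤ 1) (hN : 0 ≤ N j k i)
    (huj : 0 ≤ u j) (huk : 0 ≤ u k) : 0 ≤ fragmentGain a p N u i j k := by
  have : 0 ≤ 1 - p j k := by linarith
  rw [fragmentGain]
  split_ifs <;> positivity

theorem mul_fragmentGain_le (hi : 1 ≤ i) (ha : 0 ≤ a j k) (hp0 : 0 ≤ p j k)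
    (hp1 : p j k ≤ 1) (hN : ∀ s, 0 ≤ N j k s)
    (hmass : ∑ s ∈ Icc 1 (j + k - 1), (s : ℝ) * N j k s = (j : ℝ) + (k : ℝ))
    (huj : 0 ≤ u j) (huk : 0 ≤ u k) :
    (i : ℝ) * fragmentGain a p N u i j k ≤ collisionMassRate a u j k := by
  rw [fragmentGain, collisionMassRate]
  split_ifs with h
  · have hiN := single_mul_le_of_mass (mem_Icc.mpr ⟨hi, by omega⟩) hN hmass
    have : 0 ≤ 1 - p j k := by linarith
    calc (i : ℝ) * (N j k i * (1 - p j k) * a j k * u j * u k)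
        = (i * N j k i) * (1 - p j k) * (a j k * u j * u k) := by ring
      _ ≤ ((j + k : ℕ) : ℝ) * 1 * (a j k * u j * u k) := by
          gcongr
          linarith
      _ = _ := by ring
  · rw [mul_zero]
    positivity

theorem sum_mul_fragmentGain :
    ∑ i ∈ Icc 1 n, (i : ℝ) / 2 * fragmentGain a p N u i j k
      = breakGainFlux a p N u n j k := by
  simp only [fragmentGain, mul_ite, mul_zero]
  rw [← sum_filter, breakGainFlux, fragmentMass, sum_div, sum_mul]
  have : (Icc 1 n).filter (· < j + k) = Icc 1 (min n (j + k - 1)) := by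
    ext s
    simp only [mem_filter, mem_Icc]
    omega
  rw [this]
  exact sum_congr rfl fun s _ => by ring

theorem collisionMassRate_nonneg (ha : 0 ≤ a j k) (huj : 0 ≤ u j) (huk : 0 ≤ u k) :
    0 ≤ collisionMassRate a u j k := by
  rw [collisionMassRate]
  positivity

theorem collisionMassRate_le {A : ℝ} (hA : 0 ≤ A) (ha : a j k ≤ A * ((j : ℝ) + (k : ℝ)))
    (hj : 1 ≤ j) (hk : 1 ≤ k) (huj : 0 ≤ u j) (huk : 0 ≤ u k) :
    collisionMassRate a u j k ≤ 4 * A * (((j : ℝ) ^ 2 * u j) * ((k : ℝ) ^ 2 * u k)) := by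
  have hj' : (1 : ℝ) ≤ j := by exact_mod_cast hj
  have hk' : (1 : ℝ) ≤ k := by exact_mod_cast hk
  have hsum : (j : ℝ) + k ≤ 2 * (j * k) := by nlinarith
  have hsq : ((j : ℝ) + k) ^ 2 ≤ 4 * (j ^ 2 * k ^ 2) := by
    nlinarith [pow_le_pow_left₀ (by positivity) hsum 2]
  have huu : 0 ≤ u j * u k := mul_nonneg huj huk
  rw [collisionMassRate, Nat.cast_add]
  calc ((j : ℝ) + k) * (a j k * u j * u k) = ((j : ℝ) + k) * a j k * (u j * u k) := by ring
    _ ≤ ((j : ℝ) + k) * (A * ((j : ℝ) + k)) * (u j * u k) := by gcongr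
    _ = A * ((j : ℝ) + k) ^ 2 * (u j * u k) := by ring
    _ ≤ A * (4 * (j ^ 2 * k ^ 2)) * (u j * u k) := by gcongr
    _ = _ := by ring

end Fluxes

section PairSums

variable {a p : ℕ → ℕ → ℝ} {N : ℕ → ℕ → ℕ → ℝ} {u : ℕ → ℝ} (n : ℕ)

theorem hasSum_coagGainFlux :
    HasSum (fun x : ℕ × ℕ => coagGainFlux a p u n (x.1 + 1) (x.2 + 1))
      (∑ i ∈ Icc 1 n, (i : ℝ) * coagGain a p i u) := by
  have hfin : Summable fun x : ℕ × ℕ => coagGainFlux a p u n (x.1 + 1) (x.2 + 1) := by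
    refine summable_of_ne_finset_zero (s := range n ×ˢ range n) fun x hx => if_neg ?_
    simp only [mem_product, mem_range, not_and_or, not_lt] at hx
    omega
  have hsize : ∀ d, ∑ k ∈ Icc 1 (d - 1), coagGainFlux a p u n (d - k) k
      = if d ≤ n then (d : ℝ) * coagGain a p d u else 0 := by
    intro d
    rw [sum_Icc_reflect_pairs (coagGainFlux a p u n)]
    split_ifs with hd
    · rw [coagGain, ← mul_assoc, mul_sum]
      refine sum_congr rfl fun j hj => ?_
      rw [mem_Icc] at hj
      rw [coagGainFlux, if_pos (by omega), Nat.add_sub_cancel' (by omega)]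
      ring
    · exact sum_eq_zero fun j hj => if_neg (by rw [mem_Icc] at hj; omega)
  have hgroup := hfin.hasSum.sum_Icc_of_pairs
  simp only [hsize] at hgroup
  exact hgroup.unique (hasSum_ite_le_sum_Icc (by simp) n) ▸ hfin.hasSum

theorem hasSum_coagLossFlux
    (h : Summable fun x : ℕ × ℕ => coagLossFlux a u n (x.1 + 1) (x.2 + 1)) :
    HasSum (fun x : ℕ × ℕ => coagLossFlux a u n (x.1 + 1) (x.2 + 1))
      (∑ i ∈ Icc 1 n, (i : ℝ) * coagLoss a i u) := by
  set g : ℕ → ℝ := fun i => if i ≤ n then (i : ℝ) * coagLoss a i u else 0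
  have hrow : ∀ b, ∑' c, coagLossFlux a u n (b + 1) (c + 1) = g (b + 1) := by
    intro b
    simp only [coagLossFlux, g]
    split_ifs
    exacts [tsum_mul_left, tsum_zero]
  have hrows : HasSum (fun b => g (b + 1))
      (∑' x : ℕ × ℕ, coagLossFlux a u n (x.1 + 1) (x.2 + 1)) := by
    simpa only [hrow] using h.hasSum.prod_fiberwise fun b => (h.prod_factor b).hasSum
  have hg : HasSum (fun b => g (b + 1)) (∑ i ∈ Icc 1 n, (i : ℝ) * coagLoss a i u) := by
    have := (hasSum_nat_add_iff' 1).mpr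
      (hasSum_ite_le_sum_Icc (g := fun i : ℕ => (i : ℝ) * coagLoss a i u) (by simp) n)
    simpa only [range_one, sum_singleton, g, Nat.cast_zero, zero_mul, ite_self, sub_zero]
      using this
  exact hrows.unique hg ▸ h.hasSum

theorem hasSum_fragmentGain (i : ℕ)
    (h : Summable fun x : ℕ × ℕ => fragmentGain a p N u i (x.1 + 1) (x.2 + 1)) :
    HasSum (fun x : ℕ × ℕ => fragmentGain a p N u i (x.1 + 1) (x.2 + 1))
      (2 * breakGain a p N i u) := by
  have hsmall : ∀ d ∈ range (i + 1),
      ∑ k ∈ Icc 1 (d - 1), fragmentGain a p N u i (d - k) k = 0 := fun d hd =>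
    sum_eq_zero fun k hk => if_neg (by simp only [mem_range, mem_Icc] at hd hk; omega)
  have hlarge : ∀ m, ∑ k ∈ Icc 1 (m + (i + 1) - 1), fragmentGain a p N u i (m + (i + 1) - k) k
      = breakGainTerm a p N i m u := by
    intro m
    rw [breakGainTerm, show m + (i + 1) - 1 = i + m by omega]
    refine sum_congr rfl fun k hk => ?_
    rw [mem_Icc] at hk
    rw [fragmentGain, if_pos (by omega), show m + (i + 1) - k = i + 1 + m - k by omega]
  have hterms := (hasSum_nat_add_iff' (i + 1)).mpr h.hasSum.sum_Icc_of_pairs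
  simp only [hlarge, sum_eq_zero hsmall, sub_zero] at hterms
  rw [breakGain, hterms.tsum_eq, ← mul_assoc, mul_one_div_cancel two_ne_zero, one_mul]
  exact h.hasSum

theorem hasSum_breakGainFlux
    (h : ∀ i ∈ Icc 1 n,
      Summable fun x : ℕ × ℕ => fragmentGain a p N u i (x.1 + 1) (x.2 + 1)) :
    HasSum (fun x : ℕ × ℕ => breakGainFlux a p N u n (x.1 + 1) (x.2 + 1))
      (∑ i ∈ Icc 1 n, (i : ℝ) * breakGain a p N i u) := by
  have := hasSum_sum fun i hi => (hasSum_fragmentGain i (h i hi)).mul_left ((i : ℝ) / 2)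
  have hhalf : ∀ i : ℕ, (i : ℝ) / 2 * (2 * breakGain a p N i u) = i * breakGain a p N i u :=
    fun i => by ring
  simpa only [sum_mul_fragmentGain, hhalf] using this

theorem hasSum_massFlux (ha_nonneg : ∀ i j, 0 ≤ a i j)
    (hp_nonneg : ∀ i j, 0 ≤ p i j) (hp_le : ∀ i j, p i j ≤ 1)
    (hN_nonneg : ∀ i j s, 0 ≤ N i j s)
    (hN_mass : ∀ i j : ℕ, 1 ≤ i → 1 ≤ j →
      ∑ s ∈ Icc 1 (i + j - 1), (s : ℝ) * N i j s = (i : ℝ) + (j : ℝ))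
    (hu : ∀ i, 1 ≤ i → 0 ≤ u i)
    (hrate : Summable fun x : ℕ × ℕ => collisionMassRate a u (x.1 + 1) (x.2 + 1)) :
    HasSum (fun x : ℕ × ℕ => massFlux a p N u n (x.1 + 1) (x.2 + 1))
      (∑ i ∈ Icc 1 n, (i : ℝ) * coagRHS a p N i u) := by
  have hu' : ∀ j : ℕ, 0 ≤ u (j + 1) := fun j => hu _ j.succ_pos
  have hloss : Summable fun x : ℕ × ℕ => coagLossFlux a u n (x.1 + 1) (x.2 + 1) := by
    refine hrate.of_nonneg_of_le (fun x => coagLossFlux_nonneg (ha_nonneg _ _) (hu' _) (hu' _))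
      fun x => (coagLossFlux_le (ha_nonneg _ _) (hu' _) (hu' _)).trans ?_
    rw [collisionMassRate]
    exact mul_le_mul_of_nonneg_right (by exact_mod_cast Nat.le_add_right _ _)
      (mul_nonneg (mul_nonneg (ha_nonneg _ _) (hu' _)) (hu' _))
  have hfrag : ∀ i ∈ Icc 1 n,
      Summable fun x : ℕ × ℕ => fragmentGain a p N u i (x.1 + 1) (x.2 + 1) := by
    intro i hi
    have hi : 1 ≤ i := (mem_Icc.mp hi).1
    refine hrate.of_nonneg_of_le (fun x => fragmentGain_nonneg (ha_nonneg _ _) (hp_le _ _)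
      (hN_nonneg _ _ _) (hu' _) (hu' _)) fun x => ?_
    refine le_trans ?_ (mul_fragmentGain_le hi (ha_nonneg _ _) (hp_nonneg _ _) (hp_le _ _)
      (hN_nonneg _ _) (hN_mass _ _ (by omega) (by omega)) (hu' _) (hu' _))
    exact le_mul_of_one_le_left (fragmentGain_nonneg (ha_nonneg _ _) (hp_le _ _)
      (hN_nonneg _ _ _) (hu' _) (hu' _)) (by exact_mod_cast hi)
  have hlossSwap := (Equiv.prodComm ℕ ℕ).hasSum_iff.mpr (hasSum_coagLossFlux n hloss)
  have := ((hasSum_coagGainFlux (a := a) (p := p) (u := u) n).add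
    (hasSum_breakGainFlux n hfrag)).sub (((hasSum_coagLossFlux n hloss).add hlossSwap).div_const 2)
  have hsum : ∑ i ∈ Icc 1 n, (i : ℝ) * coagRHS a p N i u
      = ∑ i ∈ Icc 1 n, (i : ℝ) * coagGain a p i u
        + ∑ i ∈ Icc 1 n, (i : ℝ) * breakGain a p N i u
        - (∑ i ∈ Icc 1 n, (i : ℝ) * coagLoss a i u
          + ∑ i ∈ Icc 1 n, (i : ℝ) * coagLoss a i u) / 2 := by
    simp only [coagRHS, mul_add, mul_sub, sum_add_distrib, sum_sub_distrib]
    ring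
  rw [hsum]
  exact this

theorem abs_sum_mul_coagRHS_le (ha_nonneg : ∀ i j, 0 ≤ a i j) (ha_symm : ∀ i j, a i j = a j i)
    (hp_nonneg : ∀ i j, 0 ≤ p i j) (hp_le : ∀ i j, p i j ≤ 1)
    (hN_nonneg : ∀ i j s, 0 ≤ N i j s)
    (hN_mass : ∀ i j : ℕ, 1 ≤ i → 1 ≤ j →
      ∑ s ∈ Icc 1 (i + j - 1), (s : ℝ) * N i j s = (i : ℝ) + (j : ℝ))
    (hu : ∀ i, 1 ≤ i → 0 ≤ u i)
    (hrate : Summable fun x : ℕ × ℕ => collisionMassRate a u (x.1 + 1) (x.2 + 1)) :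
    |∑ i ∈ Icc 1 n, (i : ℝ) * coagRHS a p N i u|
      ≤ ∑' x : ℕ × ℕ, collisionMassRate a u (x.1 + 1) (x.2 + 1) := by
  have hflux := hasSum_massFlux n ha_nonneg hp_nonneg hp_le hN_nonneg hN_mass hu hrate
  have hle : ∀ x : ℕ × ℕ, |massFlux a p N u n (x.1 + 1) (x.2 + 1)|
      ≤ collisionMassRate a u (x.1 + 1) (x.2 + 1) := fun x =>
    abs_massFlux_le (ha_nonneg _ _) (ha_symm _ _) (hp_nonneg _ _) (hp_le _ _) (hN_nonneg _ _)
      (hN_mass _ _ (by omega) (by omega)) (hu _ (by omega)) (hu _ (by omega))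
  exact abs_le.mpr ⟨hasSum_le (fun x => neg_le_of_abs_le (hle x)) hrate.hasSum.neg hflux,
    hasSum_le (fun x => le_of_abs_le (hle x)) hflux hrate.hasSum⟩

theorem tendsto_sum_mul_coagRHS (ha_nonneg : ∀ i j, 0 ≤ a i j)
    (ha_symm : ∀ i j, a i j = a j i)
    (hp_nonneg : ∀ i j, 0 ≤ p i j) (hp_le : ∀ i j, p i j ≤ 1)
    (hN_nonneg : ∀ i j s, 0 ≤ N i j s)
    (hN_mass : ∀ i j : ℕ, 1 ≤ i → 1 ≤ j →
      ∑ s ∈ Icc 1 (i + j - 1), (s : ℝ) * N i j s = (i : ℝ) + (j : ℝ))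
    (hu : ∀ i, 1 ≤ i → 0 ≤ u i)
    (hrate : Summable fun x : ℕ × ℕ => collisionMassRate a u (x.1 + 1) (x.2 + 1)) :
    Tendsto (fun n : ℕ => ∑ i ∈ Icc 1 n, (i : ℝ) * coagRHS a p N i u) atTop (𝓝 0) := by
  have hlim := tendsto_tsum_of_dominated_convergence (𝓕 := atTop) hrate
    (f := fun n (x : ℕ × ℕ) => massFlux a p N u n (x.1 + 1) (x.2 + 1)) (g := 0)
    (fun x => tendsto_const_nhds.congr' <| (eventually_ge_atTop (x.1 + 1 + (x.2 + 1))).mono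
      fun n hn => (massFlux_eq_zero hn (ha_symm _ _) (hN_mass _ _ (by omega) (by omega))).symm)
    (Eventually.of_forall fun n x => abs_massFlux_le (ha_nonneg _ _) (ha_symm _ _)
      (hp_nonneg _ _) (hp_le _ _) (hN_nonneg _ _) (hN_mass _ _ (by omega) (by omega))
      (hu _ (by omega)) (hu _ (by omega)))
  rw [Pi.zero_def, tsum_zero] at hlim
  exact hlim.congr fun n =>
    (hasSum_massFlux n ha_nonneg hp_nonneg hp_le hN_nonneg hN_mass hu hrate).tsum_eq

end PairSums

section SecondMoment

variable {A : ℝ} {a : ℕ → ℕ → ℝ} {u : ℕ → ℝ}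

theorem sq_mul_nonneg_of_pos (hu : ∀ i, 1 ≤ i → 0 ≤ u i) (i : ℕ) :
    0 ≤ (i : ℝ) ^ 2 * u i := by
  rcases i.eq_zero_or_pos with rfl | hi
  · simp
  · exact mul_nonneg (sq_nonneg _) (hu i hi)

theorem summable_collisionMassRate (hA : 0 ≤ A) (ha_nonneg : ∀ i j, 0 ≤ a i j)
    (ha_bound : ∀ i j, 1 ≤ i → 1 ≤ j → a i j ≤ A * ((i : ℝ) + (j : ℝ)))
    (hu : ∀ i, 1 ≤ i → 0 ≤ u i) (hm : Summable fun i : ℕ => (i : ℝ) ^ 2 * u i) :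
    Summable fun x : ℕ × ℕ => collisionMassRate a u (x.1 + 1) (x.2 + 1) :=
  ((hasSum_succ_mul_succ hm (by simp) (sq_mul_nonneg_of_pos hu)).mul_left (4 * A)).summable
    |>.of_nonneg_of_le
      (fun x => collisionMassRate_nonneg (ha_nonneg _ _) (hu _ (by omega)) (hu _ (by omega)))
      fun x => collisionMassRate_le hA (ha_bound _ _ (by omega) (by omega)) (by omega) (by omega)
        (hu _ (by omega)) (hu _ (by omega))

theorem tsum_collisionMassRate_le {C : ℝ} (hA : 0 ≤ A) (ha_nonneg : ∀ i j, 0 ≤ a i j)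
    (ha_bound : ∀ i j, 1 ≤ i → 1 ≤ j → a i j ≤ A * ((i : ℝ) + (j : ℝ)))
    (hu : ∀ i, 1 ≤ i → 0 ≤ u i) (hm : Summable fun i : ℕ => (i : ℝ) ^ 2 * u i)
    (hC : ∑' i : ℕ, (i : ℝ) ^ 2 * u i ≤ C) :
    ∑' x : ℕ × ℕ, collisionMassRate a u (x.1 + 1) (x.2 + 1) ≤ 4 * A * C ^ 2 := by
  have h0 : 0 ≤ ∑' i : ℕ, (i : ℝ) ^ 2 * u i := tsum_nonneg (sq_mul_nonneg_of_pos hu)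
  calc ∑' x : ℕ × ℕ, collisionMassRate a u (x.1 + 1) (x.2 + 1)
      ≤ 4 * A * (∑' i : ℕ, (i : ℝ) ^ 2 * u i) ^ 2 :=
        hasSum_le (fun x => collisionMassRate_le hA (ha_bound _ _ (by omega) (by omega))
            (by omega) (by omega) (hu _ (by omega)) (hu _ (by omega)))
          (summable_collisionMassRate hA ha_nonneg ha_bound hu hm).hasSum
          ((hasSum_succ_mul_succ hm (by simp) (sq_mul_nonneg_of_pos hu)).mul_left (4 * A))
    _ ≤ 4 * A * C ^ 2 := by gcongr

end SecondMoment

section Solution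

variable {a p : ℕ → ℕ → ℝ} {N : ℕ → ℕ → ℕ → ℝ} {T : ℝ} {w : ℕ → ℝ → ℝ}

theorem IsCoagBreakSol.hasDerivWithinAt_sum_mul (hw : IsCoagBreakSol a p N T w) (n : ℕ)
    {s : ℝ} (hs : s ∈ Set.Icc 0 T) :
    HasDerivWithinAt (fun r => ∑ i ∈ Icc 1 n, (i : ℝ) * w i r)
      (∑ i ∈ Icc 1 n, (i : ℝ) * coagRHS a p N i (fun j => w j s)) (Set.Icc 0 T) s :=
  HasDerivWithinAt.fun_sum fun i hi => (hw.2.2 i (mem_Icc.mp hi).1 s hs).2.2.const_mul _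

theorem IsCoagBreakSol.continuousOn_sum_mul_coagRHS (hw : IsCoagBreakSol a p N T w)
    (hT : 0 < T) (n : ℕ) :
    ContinuousOn (fun s => ∑ i ∈ Icc 1 n, (i : ℝ) * coagRHS a p N i (fun j => w j s))
      (Set.Icc 0 T) := by
  have hC1 : ContDiffOn ℝ 1 (fun r => ∑ i ∈ Icc 1 n, (i : ℝ) * w i r) (Set.Icc 0 T) :=
    ContDiffOn.sum fun i hi => contDiffOn_const.mul (hw.1 i (mem_Icc.mp hi).1)
  exact (hC1.continuousOn_derivWithin (uniqueDiffOn_Icc hT) le_rfl).congr fun s hs =>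
    ((hw.hasDerivWithinAt_sum_mul n hs).derivWithin (uniqueDiffOn_Icc hT s hs)).symm

end Solution

theorem mass_conservation_general
    (T : ℝ) (hT : 0 < T)
    (A : ℝ) (hA : 0 < A)
    (a p : ℕ → ℕ → ℝ) (N : ℕ → ℕ → ℕ → ℝ)
    (ha_nonneg : ∀ i j, 0 ≤ a i j) (ha_symm : ∀ i j, a i j = a j i)
    (ha_bound : ∀ i j, 1 ≤ i → 1 ≤ j → a i j ≤ A * ((i : ℝ) + (j : ℝ)))
    (hp_nonneg : ∀ i j, 0 ≤ p i j)
    (hp_le : ∀ i j, p i j ≤ 1)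
    (hN_nonneg : ∀ i j s, 0 ≤ N i j s)
    (hN_mass : ∀ i j, 1 ≤ i → 1 ≤ j →
      ∑ s ∈ Finset.Icc 1 (i+j-1), (Nat.cast s : ℝ) * N i j s = (i : ℝ) + (j : ℝ))
    (w : ℕ → ℝ → ℝ) (hw : IsCoagBreakSol a p N T w)
    (hM2 : ∃ C : ℝ, ∀ t ∈ Set.Icc (0:ℝ) T,
      Summable (fun i : ℕ => (Nat.cast i : ℝ) ^ 2 * w i t) ∧
      ∑' i : ℕ, (Nat.cast i : ℝ) ^ 2 * w i t ≤ C)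
    (hM1 : ∀ t ∈ Set.Icc (0:ℝ) T, Summable (fun i : ℕ => (Nat.cast i : ℝ) * w i t)) :
    ∀ t ∈ Set.Icc (0:ℝ) T,
      ∑' i : ℕ, (Nat.cast i : ℝ) * w i t = ∑' i : ℕ, (Nat.cast i : ℝ) * w i 0 := by
  obtain ⟨C, hC⟩ := hM2
  have hu : ∀ s ∈ Set.Icc 0 T, ∀ i, 1 ≤ i → 0 ≤ w i s := fun s hs i hi =>
    hw.2.1 i hi s hs
  have hrate : ∀ s ∈ Set.Icc 0 T, Summable fun x : ℕ × ℕ =>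
      collisionMassRate a (fun j => w j s) (x.1 + 1) (x.2 + 1) := fun s hs =>
    summable_collisionMassRate hA.le ha_nonneg ha_bound (hu s hs) (hC s hs).1
  have hbound : ∀ n : ℕ, ∀ s ∈ Set.Icc 0 T,
      |∑ i ∈ Icc 1 n, (i : ℝ) * coagRHS a p N i (fun j => w j s)| ≤ 4 * A * C ^ 2 :=
    fun n s hs => (abs_sum_mul_coagRHS_le n ha_nonneg ha_symm hp_nonneg hp_le hN_nonneg hN_mass
      (hu s hs) (hrate s hs)).trans
        (tsum_collisionMassRate_le hA.le ha_nonneg ha_bound (hu s hs) (hC s hs).1 (hC s hs).2)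
  have hlim : ∀ s ∈ Set.Icc 0 T, Tendsto (fun n : ℕ =>
      ∑ i ∈ Icc 1 n, (i : ℝ) * coagRHS a p N i (fun j => w j s)) atTop (𝓝 0) := fun s hs =>
    tendsto_sum_mul_coagRHS ha_nonneg ha_symm hp_nonneg hp_le hN_nonneg hN_mass (hu s hs)
      (hrate s hs)
  have hmass : ∀ s ∈ Set.Icc 0 T, Tendsto (fun n : ℕ => ∑ i ∈ Icc 1 n, (i : ℝ) * w i s)
      atTop (𝓝 (∑' i : ℕ, (i : ℝ) * w i s)) := fun s hs =>
    (hM1 s hs).hasSum.tendsto_sum_Icc_one (by simp)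
  intro t ht
  have hsub : Set.Icc 0 t ⊆ Set.Icc 0 T := Set.Icc_subset_Icc_right ht.2
  have hdiff := tendsto_sub_of_hasDerivWithinAt ht.1
    (fun n s hs => (hw.hasDerivWithinAt_sum_mul n (hsub hs)).mono hsub)
    (fun n => (hw.continuousOn_sum_mul_coagRHS hT n).mono hsub)
    (fun n s hs => (Real.norm_eq_abs _).trans_le (hbound n s (hsub hs)))
    (fun s hs => hlim s (hsub hs))
  exact sub_eq_zero.mp (tendsto_nhds_unique ((hmass t ht).sub (hmass 0 ⟨le_rfl, hT.le⟩)) hdiff)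

/-- Mass conservation: a nonnegative classical solution of the discrete
coagulation equations with collisional breakage with uniformly bounded second
moment (and finite first moment) conserves the total mass `∑_{i≥1} i wᵢ(t)`. -/
theorem mass_conservation
    (T : ℝ) (hT : 0 < T) (β : ℝ) (hβ1 : 1 < β) (hβ2 : β ≤ 2)
    (A α₀ : ℝ) (hA : 0 < A) (hα₀ : 0 < α₀)
    (a p : ℕ → ℕ → ℝ) (N : ℕ → ℕ → ℕ → ℝ)
    (ha_nonneg : ∀ i j, 0 ≤ a i j) (ha_symm : ∀ i j, a i j = a j i)
    (ha_bound : ∀ i j, 1 ≤ i → 1 ≤ j → a i j ≤ A * ((i : ℝ) + (j : ℝ)))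
    (hp_nonneg : ∀ i j, 0 ≤ p i j) (hp_symm : ∀ i j, p i j = p j i)
    (hp_le : ∀ i j, p i j ≤ 1)
    (hN_nonneg : ∀ i j s, 0 ≤ N i j s) (hN_symm : ∀ i j s, N i j s = N j i s)
    (hN_bound : ∀ i j s, 1 ≤ i → 1 ≤ j → s ∈ Finset.Icc 1 (i+j-1) → N i j s ≤ α₀)
    (hN_mass : ∀ i j, 1 ≤ i → 1 ≤ j →
      ∑ s ∈ Finset.Icc 1 (i+j-1), (Nat.cast s : ℝ) * N i j s = (i : ℝ) + (j : ℝ))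
    (w : ℕ → ℝ → ℝ) (hw : IsCoagBreakSol a p N T w)
    (hM2 : ∃ C : ℝ, ∀ t ∈ Set.Icc (0:ℝ) T,
      Summable (fun i : ℕ => (Nat.cast i : ℝ) ^ 2 * w i t) ∧
      ∑' i : ℕ, (Nat.cast i : ℝ) ^ 2 * w i t ≤ C)
    (hM1 : ∀ t ∈ Set.Icc (0:ℝ) T, Summable (fun i : ℕ => (Nat.cast i : ℝ) * w i t)) :
    ∀ t ∈ Set.Icc (0:ℝ) T,
      ∑' i : ℕ, (Nat.cast i : ℝ) * w i t = ∑' i : ℕ, (Nat.cast i : ℝ) * w i 0 :=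
  mass_conservation_general T hT A hA a p N ha_nonneg ha_symm ha_bound hp_nonneg hp_le hN_nonneg
    hN_mass w hw hM2 hM1
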